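/- arXiv:2011.10995 — 3 statements merged into one kernel-verified Lean document; each statement's English description precedes it below -/
import Mathlib

section
/- For every natural number n there exists a metabelian group G generated by two elements whose centralizer dimension is at least n, i.e., there exist subsets A_1, …, A_n of G with C(A_1) ⊋ C(A_2) ⊋ … ⊋ C(A_n). -/
/-- There exists a strictly descending chain `C(A 0) > C(A 1) > ⋯ > C(A (n-1))` of
centralizers of `n` subsets of `G`. -/
def CentralizerChain (G : Type*) [Group G] (n : ℕ) : Prop :=
  ∃ A : Fin n → Set G, StrictAnti fun i : Fin n => Subgroup.centralizer (A i)

/-- `G` is generated by two elements, is metabelian, and admits a strictly descending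
chain of `n` centralizers (so its centralizer dimension is at least `n`). -/
def TwoGeneratedMetabelianWithChain (G : Type) [Group G] (n : ℕ) : Prop :=
  (∃ a b : G, Subgroup.closure {a, b} = ⊤) ∧
    (∀ x y : G, x ∈ commutator G → y ∈ commutator G → x * y = y * x) ∧
    CentralizerChain G n

/-! The witness is the wreath product `C₂ ≀ C_{2^n}`. It is generated by a lamp and the
generator of the top group, and it is metabelian because both the base group and the top group
are abelian. An element `w` commutes with the indicator function of a subgroup `H` of the top group
(placed in the base) exactly when `w` translates that indicator to itself, i.e. when its top
component lies in `H`. So the `n` subgroups of index `1, 2, …, 2^(n-1)` of `C_{2^n}` give a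
strictly descending chain of `n` centralizers. -/

namespace RegularWreathProduct

section

variable {D Q : Type*} [Group D] [Group Q]

def base : (Q → D) →* D ≀ᵣ Q where
  toFun f := ⟨f, 1⟩
  map_one' := rfl
  map_mul' f g := by ext <;> simp

@[simp] theorem left_base (f : Q → D) : (base f : D ≀ᵣ Q).left = f := rfl

@[simp] theorem right_base (f : Q → D) : (base f : D ≀ᵣ Q).right = 1 := rfl

theorem base_left_mul_inl_right (w : D ≀ᵣ Q) : base w.left * inl w.right = w := by
  ext <;> simp

theorem inl_mul_base_mulSingle_mul_inv [DecidableEq Q] (q : Q) (d : D) :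
    inl q * base (Pi.mulSingle 1 d) * (inl q)⁻¹ = base (Pi.mulSingle q d) := by
  ext x
  · simp [Pi.mulSingle_apply, inv_mul_eq_one, eq_comm (a := q)]
  · simp

theorem closure_base_mulSingle_inl_eq_top [Finite Q] [DecidableEq Q] {d : D} {q : Q}
    (hd : Subgroup.zpowers d = ⊤) (hq : Subgroup.zpowers q = ⊤) :
    Subgroup.closure {base (Pi.mulSingle 1 d), inl q} = ⊤ := by
  set T := Subgroup.closure {base (Pi.mulSingle 1 d), inl q}
  have h_inl (x : Q) : inl x ∈ T := by
    obtain ⟨k, rfl⟩ := Subgroup.mem_zpowers_iff.mp (hq ▸ Subgroup.mem_top x)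
    rw [map_zpow]
    exact zpow_mem (Subgroup.subset_closure (by simp)) k
  have h_single (x : Q) (y : D) : base (Pi.mulSingle x y) ∈ T := by
    obtain ⟨k, rfl⟩ := Subgroup.mem_zpowers_iff.mp (hd ▸ Subgroup.mem_top y)
    rw [Pi.mulSingle_zpow, map_zpow, ← inl_mul_base_mulSingle_mul_inv]
    exact zpow_mem (mul_mem (mul_mem (h_inl x) (Subgroup.subset_closure (by simp)))
      (inv_mem (h_inl x))) k
  rw [eq_top_iff]
  intro w _
  rw [← base_left_mul_inl_right w]
  exact mul_mem (Subgroup.pi_mem_of_mulSingle_mem (H := T.comap base) w.left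
    fun x => h_single x (w.left x)) (h_inl w.right)

end

theorem commute_of_mem_commutator {D Q : Type*} [CommGroup D] [CommGroup Q] {v w : D ≀ᵣ Q}
    (hv : v ∈ commutator (D ≀ᵣ Q)) (hw : w ∈ commutator (D ≀ᵣ Q)) :
    v * w = w * v := by
  have hv' : v.right = 1 := Abelianization.commutator_subset_ker rightHom hv
  have hw' : w.right = 1 := Abelianization.commutator_subset_ker rightHom hw
  ext <;> simp [hv', hw', mul_comm]

variable {D Q : Type*} [CommGroup D] [Group Q]

theorem centralizer_base_mulIndicator {d : D} (hd : d ≠ 1) (H : Subgroup Q) :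
    Subgroup.centralizer {base ((H : Set Q).mulIndicator fun _ => d)} = H.comap rightHom := by
  set c : Q → D := (H : Set Q).mulIndicator fun _ => d
  ext w
  have h_comm : w * base c = base c * w ↔ ∀ x, c (w.right⁻¹ * x) = c x := by
    simp only [RegularWreathProduct.ext_iff, mul_left, mul_right, left_base, right_base, mul_one,
      one_mul, inv_one, and_true, funext_iff, Pi.mul_apply, mul_comm (c _), mul_right_inj]
  rw [Subgroup.mem_centralizer_singleton_iff, Subgroup.mem_comap, rightHom_eq_right, h_comm]
  constructor
  · intro h
    have h_right : c w.right = d := by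
      rw [← h w.right, inv_mul_cancel]
      exact Set.mulIndicator_of_mem H.one_mem _
    exact Set.mem_of_mulIndicator_ne_one (h_right ▸ hd)
  · intro h x
    classical
    simp only [c, Set.mulIndicator_apply, SetLike.mem_coe, H.mul_mem_cancel_left (H.inv_mem h)]

theorem centralizerChain_of_strictAnti {d : D} (hd : d ≠ 1) {n : ℕ}
    {H : Fin n → Subgroup Q} (hH : StrictAnti H) : CentralizerChain (D ≀ᵣ Q) n := by
  refine ⟨fun i => {base ((H i : Set Q).mulIndicator fun _ => d)}, fun i j hij => ?_⟩
  simp only [centralizer_base_mulIndicator hd]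
  exact (Subgroup.comap_lt_comap_of_surjective fun q => ⟨inl q, fun_id q⟩).2 (hH hij)

end RegularWreathProduct

theorem strictAnti_zpowers_pow_pow {G : Type*} [Group G] {g : G} {p n : ℕ} (hp : 2 ≤ p)
    (hg : orderOf g = p ^ n) :
    StrictAnti fun i : Fin n => Subgroup.zpowers (g ^ p ^ (i : ℕ)) := by
  have h_card (k : ℕ) (hk : k ≤ n) : Nat.card (Subgroup.zpowers (g ^ p ^ k)) = p ^ (n - k) := by
    rw [Nat.card_zpowers, orderOf_pow_of_dvd (by positivity) (hg ▸ pow_dvd_pow p hk), hg,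
      Nat.pow_div hk (by omega)]
  intro i j hij
  refine lt_of_le_of_ne ?_ fun h => ?_
  · rw [Subgroup.zpowers_le, ← pow_mul_pow_sub p hij.le, pow_mul]
    exact Subgroup.pow_mem _ (Subgroup.mem_zpowers _) _
  · have h_card_eq := congrArg (fun K : Subgroup G => Nat.card K) h
    simp only [h_card j j.is_lt.le, h_card i (by omega)] at h_card_eq
    have := Nat.pow_right_injective hp h_card_eq
    omega

theorem Multiplicative.zpowers_ofAdd_one_eq_top (m : ℕ) :
    Subgroup.zpowers (ofAdd (1 : ZMod m)) = ⊤ := by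
  refine (Subgroup.eq_top_iff' _).mpr fun x => ?_
  obtain ⟨k, hk⟩ := ZMod.intCast_surjective x.toAdd
  exact ⟨k, by simp [← ofAdd_zsmul, hk]⟩

theorem stmt8 (n : ℕ) :
    ∃ (G : Type) (instG : Group G), @TwoGeneratedMetabelianWithChain G instG n := by
  open RegularWreathProduct Multiplicative in
  have h_order : orderOf (ofAdd (1 : ZMod (2 ^ n))) = 2 ^ n := by
    rw [orderOf_ofAdd_eq_addOrderOf, ZMod.addOrderOf_one]
  refine ⟨Multiplicative (ZMod 2) ≀ᵣ Multiplicative (ZMod (2 ^ n)), inferInstance,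
    ⟨_, _, closure_base_mulSingle_inl_eq_top (zpowers_ofAdd_one_eq_top 2)
      (zpowers_ofAdd_one_eq_top (2 ^ n))⟩,
    fun _ _ => commute_of_mem_commutator,
    centralizerChain_of_strictAnti (d := ofAdd 1) (by decide)
      (strictAnti_zpowers_pow_pow le_rfl h_order)⟩
end

section
/- Let Δ be a finite simple graph that is not connected (Δ has at least two connected components). Then the partially commutative metabelian group M_Δ is not decomposable into a direct product: whenever M_Δ is isomorphic to a direct product A × B of groups, A or B is the trivial group. -/
open scoped commutatorElement in
/-- The commutator relators corresponding to the edges of a simple graph. -/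
def pcRels {V : Type} (Δ : SimpleGraph V) : Set (FreeGroup V) :=
  {w | ∃ x y : V, Δ.Adj x y ∧ w = ⁅FreeGroup.of x, FreeGroup.of y⁆}

/-- The (free) partially commutative group `F_Δ` defined by a simple graph `Δ`. -/
abbrev pcGroup {V : Type} (Δ : SimpleGraph V) : Type := PresentedGroup (pcRels Δ)

instance pcSecondDerivedNormal {V : Type} (Δ : SimpleGraph V) :
    (derivedSeries (pcGroup Δ) 2).Normal :=
  derivedSeries_normal _ _

/-- The partially commutative metabelian group `M_Δ = F_Δ / F_Δ''`. -/
abbrev pcMetabelianGroup {V : Type} (Δ : SimpleGraph V) : Type :=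
  pcGroup Δ ⧸ derivedSeries (pcGroup Δ) 2

/-- The image in `M_Δ` of the vertex `x`. -/
def pcGen {V : Type} (Δ : SimpleGraph V) (x : V) : pcMetabelianGroup Δ :=
  QuotientGroup.mk (PresentedGroup.of x)

/-!
Map `M_Δ` to the metabelian group `ℤ^(V) ⋉ ℤ[ℤ^(V)]^(π₀ Δ)`, in which the vertex `x` acts by
multiplication with `t_x` and translates the basis vector of its component by `t_x - 1`.
Since `ℤ[ℤ^(V)]` is a domain, two generators commute there iff they lie in the same component,
and an element commuting with two non-commuting elements is trivial. The map followed by the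
projection to `ℤ^(V)` is the abelianization, so its kernel lies in `M_Δ'`.
Given `M_Δ ≅ A × B`, the images of `A` and `B` commute elementwise; they cannot both be
commutative, since two vertices in different components do not commute in the image. If the
image of `B` is not commutative, `A` maps to `1`, so `A` embeds in the abelian group `M_Δ'`
and is perfect; a perfect metabelian group is trivial.
-/

/-- `⟨q, m⟩` acts on `M` as the affine map `v ↦ ρ q • v + m`. -/
@[ext]
structure SemidirectModule {Q R : Type*} [CommGroup Q] [CommRing R] (ρ : Q →* R)
    (M : Type*) [AddCommGroup M] [Module R M] where
  q : Q
  m : M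

namespace SemidirectModule

variable {Q R M : Type*} [CommGroup Q] [CommRing R] [AddCommGroup M] [Module R M] {ρ : Q →* R}

instance : Mul (SemidirectModule ρ M) := ⟨fun g h => ⟨g.q * h.q, g.m + ρ g.q • h.m⟩⟩
instance : One (SemidirectModule ρ M) := ⟨⟨1, 0⟩⟩
instance : Inv (SemidirectModule ρ M) := ⟨fun g => ⟨g.q⁻¹, -(ρ g.q⁻¹ • g.m)⟩⟩

@[simp] lemma mul_q (g h : SemidirectModule ρ M) : (g * h).q = g.q * h.q := rfl
@[simp] lemma mul_m (g h : SemidirectModule ρ M) : (g * h).m = g.m + ρ g.q • h.m := rfl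
@[simp] lemma one_q : (1 : SemidirectModule ρ M).q = 1 := rfl
@[simp] lemma one_m : (1 : SemidirectModule ρ M).m = 0 := rfl
@[simp] lemma inv_q (g : SemidirectModule ρ M) : g⁻¹.q = g.q⁻¹ := rfl
@[simp] lemma inv_m (g : SemidirectModule ρ M) : g⁻¹.m = -(ρ g.q⁻¹ • g.m) := rfl

instance : Group (SemidirectModule ρ M) where
  mul_assoc a b c := by ext <;> simp [mul_assoc, mul_smul, add_assoc]
  one_mul a := by ext <;> simp
  mul_one a := by ext <;> simp
  inv_mul_cancel a := by ext <;> simp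

def proj : SemidirectModule ρ M →* Q where
  toFun := q
  map_one' := rfl
  map_mul' _ _ := rfl

theorem commute_iff {g h : SemidirectModule ρ M} :
    Commute g h ↔ (ρ g.q - 1) • h.m = (ρ h.q - 1) • g.m := by
  rw [Commute, SemiconjBy, SemidirectModule.ext_iff, sub_smul, sub_smul, one_smul, one_smul,
    sub_eq_sub_iff_add_eq_add]
  simp only [mul_q, mul_m, mul_comm g.q, true_and, add_comm g.m, add_comm h.m]

theorem commute_of_map_eq_one {g h : SemidirectModule ρ M} (hg : ρ g.q = 1) (hh : ρ h.q = 1) :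
    Commute g h := by
  rw [commute_iff, hg, hh, sub_self, zero_smul, zero_smul]

theorem derivedSeries_two_eq_bot : derivedSeries (SemidirectModule ρ M) 2 = ⊥ := by
  have hker : commutator (SemidirectModule ρ M) ≤ (proj : SemidirectModule ρ M →* Q).ker :=
    Abelianization.commutator_subset_ker proj
  rw [derivedSeries_succ, derivedSeries_one, eq_bot_iff, Subgroup.commutator_le]
  intro g hg h hh
  rw [Subgroup.mem_bot, commutatorElement_eq_one_iff_commute]
  exact commute_of_map_eq_one (by rw [show g.q = 1 from hker hg, map_one])
    (by rw [show h.q = 1 from hker hh, map_one])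

variable [IsDomain R] [Module.IsTorsionFree R M]

theorem map_eq_one_of_commute {g k : SemidirectModule ρ M} (hk : ρ k.q = 1) (hm : k.m ≠ 0)
    (h : Commute g k) : ρ g.q = 1 := by
  rw [commute_iff, hk, sub_self, zero_smul, smul_eq_zero] at h
  exact sub_eq_zero.mp (h.resolve_right hm)

theorem commute_of_commute_of_map_ne_one {g h k : SemidirectModule ρ M} (hk : ρ k.q ≠ 1)
    (hg : Commute g k) (hh : Commute h k) : Commute g h := by
  rw [commute_iff] at hg hh ⊢
  refine smul_right_injective M (sub_ne_zero.mpr hk) ?_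
  calc (ρ k.q - 1) • (ρ g.q - 1) • h.m
      = (ρ g.q - 1) • (ρ h.q - 1) • k.m := by rw [smul_comm, hh]
    _ = (ρ h.q - 1) • (ρ k.q - 1) • g.m := by rw [smul_comm, hg]
    _ = (ρ k.q - 1) • (ρ h.q - 1) • g.m := smul_comm _ _ _

theorem eq_one_of_commute_of_not_commute (hρ : Function.Injective ρ)
    {g h₁ h₂ : SemidirectModule ρ M} (hg₁ : Commute g h₁) (hg₂ : Commute g h₂)
    (hh : ¬ Commute h₁ h₂) : g = 1 := by
  have hgq : ρ g.q = 1 := by_contra fun hgq =>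
    hh (commute_of_commute_of_map_ne_one hgq hg₁.symm hg₂.symm)
  have hgm : g.m = 0 := by_contra fun hgm =>
    hh (commute_of_map_eq_one (map_eq_one_of_commute hgq hgm hg₁.symm)
      (map_eq_one_of_commute hgq hgm hg₂.symm))
  exact SemidirectModule.ext (hρ (hgq.trans (map_one ρ).symm)) hgm

end SemidirectModule

section DirectProduct

variable {G H A B : Type*} [Group G] [Group H] [Group A] [Group B]

theorem eq_one_of_commutator_eq_top_of_derivedSeries_two_eq_bot
    (hperf : commutator A = ⊤) (hmeta : derivedSeries A 2 = ⊥) (a : A) : a = 1 := by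
  have htop : derivedSeries A 2 = ⊤ := by
    rw [derivedSeries_succ, derivedSeries_one, hperf, ← commutator_def, hperf]
  exact Subgroup.mem_bot.mp (htop.symm.trans hmeta ▸ Subgroup.mem_top a)

theorem MulEquiv.commute_symm_mk_one_symm_one_mk (e : G ≃* A × B) (a : A) (b : B) :
    Commute (e.symm (a, 1)) (e.symm (1, b)) :=
  Commute.map (show Commute (a, (1 : B)) (1, b) by ext <;> simp) e.symm

theorem forall_eq_one_of_not_commute_right (f : G →* H) (hker : f.ker ≤ commutator G)
    (hmeta : derivedSeries G 2 = ⊥)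
    (hH : ∀ g h₁ h₂ : H, Commute g h₁ → Commute g h₂ → ¬ Commute h₁ h₂ → g = 1)
    (e : G ≃* A × B) {b₁ b₂ : B}
    (hb : ¬ Commute (f (e.symm (1, b₁))) (f (e.symm (1, b₂)))) (a : A) : a = 1 := by
  set p : G →* A := (MonoidHom.fst A B).comp e.toMonoidHom
  have hp : Function.Surjective p := fun a => ⟨e.symm (a, 1), by simp [p]⟩
  refine eq_one_of_commutator_eq_top_of_derivedSeries_two_eq_bot ?_ ?_ a
  · rw [eq_top_iff, ← derivedSeries_one, ← map_derivedSeries_eq hp, derivedSeries_one]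
    intro a _
    have hfa : f (e.symm (a, 1)) = 1 :=
      hH _ _ _ ((e.commute_symm_mk_one_symm_one_mk a b₁).map f)
        ((e.commute_symm_mk_one_symm_one_mk a b₂).map f) hb
    exact ⟨e.symm (a, 1), hker hfa, by simp [p]⟩
  · rw [← map_derivedSeries_eq hp, hmeta, Subgroup.map_bot]

theorem forall_eq_one_or_forall_eq_one_of_mulEquiv_prod (f : G →* H)
    (hker : f.ker ≤ commutator G) (hmeta : derivedSeries G 2 = ⊥)
    (hH : ∀ g h₁ h₂ : H, Commute g h₁ → Commute g h₂ → ¬ Commute h₁ h₂ → g = 1)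
    (hf : ∃ x y : G, ¬ Commute (f x) (f y)) (e : G ≃* A × B) :
    (∀ a : A, a = 1) ∨ (∀ b : B, b = 1) := by
  by_contra! ⟨⟨a, ha⟩, ⟨b, hb⟩⟩
  have hA : ∀ a₁ a₂ : A, Commute (f (e.symm (a₁, 1))) (f (e.symm (a₂, 1))) := fun a₁ a₂ =>
    by_contra fun h => hb <| forall_eq_one_of_not_commute_right f hker hmeta hH
      (e.trans MulEquiv.prodComm) (by simpa using h) b
  have hB : ∀ b₁ b₂ : B, Commute (f (e.symm (1, b₁))) (f (e.symm (1, b₂))) := fun b₁ b₂ =>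
    by_contra fun h => ha (forall_eq_one_of_not_commute_right f hker hmeta hH e h a)
  have hAB (a : A) (b : B) : Commute (f (e.symm (a, 1))) (f (e.symm (1, b))) :=
    (e.commute_symm_mk_one_symm_one_mk a b).map f
  have hsplit (g : G) : f g = f (e.symm ((e g).1, 1)) * f (e.symm (1, (e g).2)) := by
    rw [← map_mul, ← map_mul, Prod.mk_mul_mk, mul_one, one_mul, Prod.mk.eta, e.symm_apply_apply]
  obtain ⟨x, y, hxy⟩ := hf
  rw [hsplit x, hsplit y] at hxy
  exact hxy (((hA _ _).mul_right (hAB _ _)).mul_left ((hAB _ _).symm.mul_right (hB _ _)))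

end DirectProduct

theorem derivedSeries_quotient_derivedSeries (G : Type*) [Group G] (n : ℕ) :
    derivedSeries (G ⧸ derivedSeries G n) n = ⊥ := by
  rw [← map_derivedSeries_eq (QuotientGroup.mk'_surjective _)]
  exact (Subgroup.map_eq_bot_iff _).mpr (QuotientGroup.ker_mk' _).ge

theorem derivedSeries_le_ker {G N : Type*} [Group G] [Group N] (φ : G →* N) {n : ℕ}
    (hN : derivedSeries N n = ⊥) : derivedSeries G n ≤ φ.ker :=
  Subgroup.map_le_iff_le_comap.mp ((map_derivedSeries_le_derivedSeries φ n).trans hN.le)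

theorem ker_le_commutator_of_comp_eq_of {G H : Type*} [Group G] [Group H] (f : G →* H)
    (β : H →* Abelianization G) (hβ : β.comp f = Abelianization.of) : f.ker ≤ commutator G := by
  intro g hg
  have hg' : Abelianization.of g = 1 := by rw [← hβ, MonoidHom.comp_apply, hg, map_one]
  exact (QuotientGroup.eq_one_iff g).mp hg'

noncomputable def freeAbelianLift {V C : Type*} [CommGroup C] (f : V → C) :
    Multiplicative (V →₀ ℤ) →* C :=
  AddMonoidHom.toMultiplicativeLeft
    (Finsupp.liftAddHom fun x => zmultiplesHom (Additive C) (Additive.ofMul (f x)))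

@[simp]
theorem freeAbelianLift_single {V C : Type*} [CommGroup C] (f : V → C) (x : V) :
    freeAbelianLift f (Multiplicative.ofAdd (Finsupp.single x 1)) = f x := by
  simp [freeAbelianLift]

namespace SimpleGraph

variable {V : Type} (Δ : SimpleGraph V)

theorem pcMetabelianGroup_hom_ext {N : Type*} [Group N] {φ ψ : pcMetabelianGroup Δ →* N}
    (h : ∀ x, φ (pcGen Δ x) = ψ (pcGen Δ x)) : φ = ψ :=
  QuotientGroup.monoidHom_ext _ (PresentedGroup.ext (φ := φ.comp (QuotientGroup.mk' _)) h)

noncomputable def pcMetabelianLift {N : Type*} [Group N] (hN : derivedSeries N 2 = ⊥) (f : V → N)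
    (hf : ∀ x y, Δ.Adj x y → Commute (f x) (f y)) : pcMetabelianGroup Δ →* N :=
  QuotientGroup.lift _ (PresentedGroup.toGroup (f := f) (by
      rintro r ⟨x, y, hxy, rfl⟩
      rw [map_commutatorElement, FreeGroup.lift_apply_of, FreeGroup.lift_apply_of,
        commutatorElement_eq_one_iff_commute]
      exact hf x y hxy))
    (derivedSeries_le_ker _ hN)

@[simp]
theorem pcMetabelianLift_pcGen {N : Type*} [Group N] (hN : derivedSeries N 2 = ⊥) (f : V → N)
    (hf : ∀ x y, Δ.Adj x y → Commute (f x) (f y)) (x : V) :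
    pcMetabelianLift Δ hN f hf (pcGen Δ x) = f x := by
  rw [pcMetabelianLift, pcGen, QuotientGroup.lift_mk]
  exact PresentedGroup.toGroup.of _

abbrev ComponentSemidirect : Type :=
  SemidirectModule (MonoidAlgebra.of ℤ (Multiplicative (V →₀ ℤ)))
    (Δ.ConnectedComponent →₀ MonoidAlgebra ℤ (Multiplicative (V →₀ ℤ)))

noncomputable def componentGen (x : V) : Δ.ComponentSemidirect :=
  ⟨Multiplicative.ofAdd (Finsupp.single x 1), Finsupp.single (Δ.connectedComponentMk x)
    (MonoidAlgebra.of ℤ _ (Multiplicative.ofAdd (Finsupp.single x 1)) - 1)⟩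

theorem commute_componentGen_iff {x y : V} :
    Commute (Δ.componentGen x) (Δ.componentGen y) ↔ Δ.Reachable x y := by
  have hτ (z : V) :
      MonoidAlgebra.of ℤ _ (Multiplicative.ofAdd (Finsupp.single z (1 : ℤ))) - 1 ≠ 0 := by
    refine sub_ne_zero.mpr fun h => ?_
    have := MonoidAlgebra.of_injective (h.trans (map_one _).symm)
    simp at this
  rw [SemidirectModule.commute_iff]
  simp only [componentGen, Finsupp.smul_single, smul_eq_mul]
  rw [Finsupp.single_eq_single_iff, ConnectedComponent.eq, mul_comm]
  simp only [and_true, and_self, mul_eq_zero, hτ, or_self, or_false, reachable_comm]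

noncomputable def componentRep : pcMetabelianGroup Δ →* Δ.ComponentSemidirect :=
  pcMetabelianLift Δ SemidirectModule.derivedSeries_two_eq_bot Δ.componentGen
    fun _ _ h => (Δ.commute_componentGen_iff).mpr h.reachable

theorem ker_componentRep_le : Δ.componentRep.ker ≤ commutator (pcMetabelianGroup Δ) :=
  ker_le_commutator_of_comp_eq_of _
    ((freeAbelianLift fun x => Abelianization.of (pcGen Δ x)).comp SemidirectModule.proj)
    (pcMetabelianGroup_hom_ext Δ fun x => by
      simp [componentRep, componentGen, SemidirectModule.proj])

end SimpleGraph

theorem stmt13_general {V : Type} (Δ : SimpleGraph V)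
    (hdisc : ¬ Δ.Preconnected) (A B : Type) [Group A] [Group B]
    (e : pcMetabelianGroup Δ ≃* A × B) :
    (∀ a : A, a = 1) ∨ (∀ b : B, b = 1) := by
  obtain ⟨u, v, huv⟩ : ∃ u v, ¬ Δ.Reachable u v := by
    simpa [SimpleGraph.Preconnected] using hdisc
  refine forall_eq_one_or_forall_eq_one_of_mulEquiv_prod Δ.componentRep Δ.ker_componentRep_le
    (derivedSeries_quotient_derivedSeries _ 2)
    (fun _ _ _ => SemidirectModule.eq_one_of_commute_of_not_commute MonoidAlgebra.of_injective)
    ⟨pcGen Δ u, pcGen Δ v, ?_⟩ e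
  simpa [SimpleGraph.componentRep, SimpleGraph.commute_componentGen_iff] using huv

theorem stmt13 {V : Type} [Fintype V] (Δ : SimpleGraph V)
    (hdisc : ¬ Δ.Preconnected) (A B : Type) [Group A] [Group B]
    (e : pcMetabelianGroup Δ ≃* A × B) :
    (∀ a : A, a = 1) ∨ (∀ b : B, b = 1) :=
  stmt13_general Δ hdisc A B e
end

section
/- Let R be an infinite commutative integral domain of characteristic different from 2, let Γ = (A;E) be a finite simple graph, and let a_i, a_j ∈ A be non-adjacent vertices of Γ. Then the annihilator of the element ⁅a_i, a_j⁆ of the R[A]-module L' (the derived ideal of ℳ_R(A;Γ)) equals the ideal I^Γ_{i,j} of R[A]. -/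
/-- The Lie ideal of the free Lie algebra generated by the brackets of
adjacent vertices of the graph `Γ`. -/
noncomputable def pcLieRels (R : Type) [CommRing R] {A : Type} (Γ : SimpleGraph A) :
    LieIdeal R (FreeLieAlgebra R A) :=
  LieSubmodule.lieSpan R (FreeLieAlgebra R A)
    {x | ∃ a b : A, Γ.Adj a b ∧ x = ⁅FreeLieAlgebra.of R a, FreeLieAlgebra.of R b⁆}

/-- The partially commutative Lie `R`-algebra `ℒ_R(A;Γ)` defined by a graph `Γ`. -/
abbrev pcLieAlgebra (R : Type) [CommRing R] {A : Type} (Γ : SimpleGraph A) : Type :=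
  FreeLieAlgebra R A ⧸ pcLieRels R Γ

/-- The image in `ℒ_R(A;Γ)` of the vertex `a`. -/
noncomputable def pcLieGen (R : Type) [CommRing R] {A : Type} (Γ : SimpleGraph A) (a : A) :
    pcLieAlgebra R Γ :=
  LieSubmodule.Quotient.mk (N := pcLieRels R Γ) (FreeLieAlgebra.of R a)

/-- The partially commutative metabelian Lie `R`-algebra `ℳ_R(A;Γ)`:
the quotient of `ℒ_R(A;Γ)` by its second derived ideal. -/
abbrev pcMetabelianLieAlgebra (R : Type) [CommRing R] {A : Type} (Γ : SimpleGraph A) : Type :=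
  pcLieAlgebra R Γ ⧸ LieAlgebra.derivedSeries R (pcLieAlgebra R Γ) 2

/-- The image in `ℳ_R(A;Γ)` of the vertex `a`. -/
noncomputable def pcMetLieGen (R : Type) [CommRing R] {A : Type} (Γ : SimpleGraph A) (a : A) :
    pcMetabelianLieAlgebra R Γ :=
  LieSubmodule.Quotient.mk (N := LieAlgebra.derivedSeries R (pcLieAlgebra R Γ) 2)
    (pcLieGen R Γ a)

/-- The derived ideal `L'` of the partially commutative metabelian Lie algebra. -/
noncomputable abbrev pcMetDerivedIdeal (R : Type) [CommRing R] {A : Type}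
    (Γ : SimpleGraph A) : LieIdeal R (pcMetabelianLieAlgebra R Γ) :=
  LieAlgebra.derivedSeries R (pcMetabelianLieAlgebra R Γ) 1

/-- The adjoint action of an element of `ℳ_R(A;Γ)`, restricted to an
`R`-linear endomorphism of the derived ideal `L'`. -/
noncomputable def pcAdEnd (R : Type) [CommRing R] {A : Type} (Γ : SimpleGraph A)
    (x : pcMetabelianLieAlgebra R Γ) : Module.End R (pcMetDerivedIdeal R Γ) where
  toFun y := ⟨⁅x, (y : pcMetabelianLieAlgebra R Γ)⁆, (pcMetDerivedIdeal R Γ).lie_mem y.2⟩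
  map_add' y z := Subtype.ext (by simp)
  map_smul' r y := Subtype.ext (by simp)

/-- The bracket `⁅a_i, a_j⁆` of two generators, as an element of the derived ideal. -/
noncomputable def pcBracketGen (R : Type) [CommRing R] {A : Type} (Γ : SimpleGraph A)
    (ai aj : A) : pcMetDerivedIdeal R Γ :=
  ⟨⁅pcMetLieGen R Γ ai, pcMetLieGen R Γ aj⁆, by
    show ⁅pcMetLieGen R Γ ai, pcMetLieGen R Γ aj⁆ ∈
      ⁅(⊤ : LieIdeal R (pcMetabelianLieAlgebra R Γ)), (⊤ : LieIdeal R (pcMetabelianLieAlgebra R Γ))⁆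
    exact LieSubmodule.lie_mem_lie (LieSubmodule.mem_top _) (LieSubmodule.mem_top _)⟩

/-- The ideal `I^Γ_{i,j}` of `R[A]`: the ideal generated by the monomials
`b_1 ⋯ b_s` over all paths `(a_i, b_1, …, b_s, a_j)` in `Γ` joining `a_i` to `a_j`
(it is the zero ideal when `a_i` and `a_j` lie in different connected components). -/
noncomputable def pcPathIdeal (R : Type) [CommRing R] {A : Type} (Γ : SimpleGraph A) (ai aj : A) :
    Ideal (MvPolynomial A R) :=
  Ideal.span {p : MvPolynomial A R | ∃ w : Γ.Walk ai aj, w.IsPath ∧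
    p = (w.support.tail.dropLast.map MvPolynomial.X).prod}

/-!
A path `(a_i, b_1, …, b_s, a_j)` annihilates `⁅a_i, a_j⁆`: since `⁅a_i, b_1⁆ = 0`, the Jacobi
identity gives `ad(b_1) ⁅a_i, a_j⁆ = ad(a_i) ⁅b_1, a_j⁆`, and induction along the path ends at
the bracket of two adjacent vertices, which is zero.

Conversely, let `p` annihilate `⁅a_i, a_j⁆` and let `x^α` be one of its monomials; put
`V = supp α ∪ {a_i, a_j}`. If `a_i` and `a_j` are joined by a path inside `V`, then `x^α` is a
multiple of its monomial. Otherwise send each vertex `a` to the element `(ξ_a w_a, ξ_a)` of the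
affine Lie algebra over `K = R[V]`, where `ξ` kills the variables outside `V` and `w` is the
indicator of the vertices that `a_i` cannot reach inside `V`. The relations of `Γ`
hold there, `L'` acts through multiplication by `ξ`, and `⁅a_i, a_j⁆` goes to `ξ_{a_i} ξ_{a_j}`,
so `ξ(p) x_{a_i} x_{a_j} = 0`. Hence `ξ(p) = 0`, and the coefficient of `x^α` in `p` vanishes.
-/

open MvPolynomial

namespace LieIdeal

variable {R L L₂ : Type*} [CommRing R] [LieRing L] [LieAlgebra R L] [LieRing L₂]
  [LieAlgebra R L₂]

def Quotient.lift (I : LieIdeal R L) (f : L →ₗ⁅R⁆ L₂) (h : I ≤ f.ker) : L ⧸ I →ₗ⁅R⁆ L₂ :=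
  { (I : Submodule R L).liftQ (f : L →ₗ[R] L₂) fun x hx => f.mem_ker.1 (h hx) with
    map_lie' := by
      rintro ⟨x⟩ ⟨y⟩
      exact f.map_lie x y }

@[simp]
lemma Quotient.lift_mk (I : LieIdeal R L) (f : L →ₗ⁅R⁆ L₂) (h : I ≤ f.ker) (x : L) :
    Quotient.lift I f h (LieSubmodule.Quotient.mk x) = f x :=
  rfl

end LieIdeal

/-- `⟨u, α⟩` stands for the affine vector field `t ↦ α t + u` on `K`, i.e. the matrix
`!![α, u; 0, 0]`, and the bracket below is the matrix commutator. -/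
@[ext]
structure AffineLieAlgebra (K : Type*) where
  trans : K
  lin : K

namespace AffineLieAlgebra

variable {R K : Type*} [CommRing R] [CommRing K] [Algebra R K]

def equivProd : AffineLieAlgebra K ≃ K × K where
  toFun x := (x.trans, x.lin)
  invFun p := ⟨p.1, p.2⟩

instance : AddCommGroup (AffineLieAlgebra K) := equivProd.addCommGroup

instance : Module R (AffineLieAlgebra K) := equivProd.module R

@[simp] lemma trans_zero : (0 : AffineLieAlgebra K).trans = 0 := rfl
@[simp] lemma lin_zero : (0 : AffineLieAlgebra K).lin = 0 := rfl
@[simp] lemma trans_add (x y : AffineLieAlgebra K) : (x + y).trans = x.trans + y.trans := rfl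
@[simp] lemma lin_add (x y : AffineLieAlgebra K) : (x + y).lin = x.lin + y.lin := rfl
@[simp] lemma trans_smul (r : R) (x : AffineLieAlgebra K) : (r • x).trans = r • x.trans := rfl
@[simp] lemma lin_smul (r : R) (x : AffineLieAlgebra K) : (r • x).lin = r • x.lin := rfl

instance : Bracket (AffineLieAlgebra K) (AffineLieAlgebra K) where
  bracket x y := ⟨x.lin * y.trans - y.lin * x.trans, 0⟩

@[simp] lemma trans_lie (x y : AffineLieAlgebra K) :
    ⁅x, y⁆.trans = x.lin * y.trans - y.lin * x.trans := rfl
@[simp] lemma lin_lie (x y : AffineLieAlgebra K) : ⁅x, y⁆.lin = 0 := rfl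

instance : LieRing (AffineLieAlgebra K) where
  add_lie _ _ _ := by
    ext <;> simp only [trans_lie, trans_add, lin_lie, lin_add, add_zero]
    ring
  lie_add _ _ _ := by
    ext <;> simp only [trans_lie, trans_add, lin_lie, lin_add, add_zero]
    ring
  lie_self _ := by ext <;> simp [mul_comm]
  leibniz_lie _ _ _ := by
    ext <;> simp only [trans_lie, trans_add, lin_lie, lin_add, add_zero, zero_mul, sub_zero,
      zero_sub]
    ring

instance : LieAlgebra R (AffineLieAlgebra K) where
  lie_smul _ _ _ := by ext <;> simp [smul_sub]

lemma lin_eq_zero_of_mem_derivedSeries_one {x : AffineLieAlgebra K}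
    (hx : x ∈ LieAlgebra.derivedSeries R (AffineLieAlgebra K) 1) : x.lin = 0 := by
  rw [LieAlgebra.derivedSeries_def, LieAlgebra.derivedSeriesOfIdeal_succ,
    LieAlgebra.derivedSeriesOfIdeal_zero, LieSubmodule.lieIdeal_oper_eq_span] at hx
  induction hx using LieSubmodule.lieSpan_induction with
  | mem x hx => obtain ⟨y, z, rfl⟩ := hx; simp
  | zero => rfl
  | add x y _ _ hx hy => simp [hx, hy]
  | smul r x _ hx => simp [hx]
  | lie x y _ hy => simp

lemma derivedSeries_two_eq_bot : LieAlgebra.derivedSeries R (AffineLieAlgebra K) 2 = ⊥ := by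
  rw [eq_bot_iff, LieAlgebra.derivedSeries_def, LieAlgebra.derivedSeriesOfIdeal_succ,
    LieSubmodule.lieIdeal_oper_eq_span, LieSubmodule.lieSpan_le]
  rintro - ⟨⟨x, hx⟩, ⟨y, hy⟩, rfl⟩
  ext <;> simp [lin_eq_zero_of_mem_derivedSeries_one hx, lin_eq_zero_of_mem_derivedSeries_one hy]

end AffineLieAlgebra

section AffineRepresentation

variable (R : Type) [CommRing R] {A : Type} {Γ : SimpleGraph A}
  {K : Type*} [CommRing K] [Algebra R K] (ξ w : A → K)

def affineGen (a : A) : AffineLieAlgebra K := ⟨ξ a * w a, ξ a⟩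

lemma lie_affineGen (a b : A) :
    ⁅affineGen ξ w a, affineGen ξ w b⁆ = ⟨ξ a * ξ b * (w b - w a), 0⟩ := by
  ext <;> simp only [affineGen, AffineLieAlgebra.trans_lie, AffineLieAlgebra.lin_lie]
  ring

variable {ξ w} (hw : ∀ a b, Γ.Adj a b → ξ a * ξ b * (w b - w a) = 0)
include hw

lemma pcLieRels_le_ker_lift_affineGen :
    pcLieRels R Γ ≤ (FreeLieAlgebra.lift R (affineGen ξ w)).ker := by
  rw [pcLieRels, LieSubmodule.lieSpan_le]
  rintro - ⟨a, b, hab, rfl⟩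
  simp only [SetLike.mem_coe, LieHom.mem_ker, LieHom.map_lie, FreeLieAlgebra.lift_of_apply,
    lie_affineGen, hw a b hab]
  rfl

noncomputable def pcLieToAffine : pcLieAlgebra R Γ →ₗ⁅R⁆ AffineLieAlgebra K :=
  LieIdeal.Quotient.lift _ _ (pcLieRels_le_ker_lift_affineGen R hw)

lemma derivedSeries_two_le_ker_pcLieToAffine :
    LieAlgebra.derivedSeries R (pcLieAlgebra R Γ) 2 ≤ (pcLieToAffine R hw).ker := by
  intro x hx
  have := LieIdeal.derivedSeries_map_le (f := pcLieToAffine R hw) 2 (LieIdeal.mem_map hx)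
  rwa [AffineLieAlgebra.derivedSeries_two_eq_bot, LieSubmodule.mem_bot, ← LieHom.mem_ker] at this

noncomputable def pcMetToAffine : pcMetabelianLieAlgebra R Γ →ₗ⁅R⁆ AffineLieAlgebra K :=
  LieIdeal.Quotient.lift _ _ (derivedSeries_two_le_ker_pcLieToAffine R hw)

@[simp]
lemma pcMetToAffine_gen (a : A) : pcMetToAffine R hw (pcMetLieGen R Γ a) = affineGen ξ w a := by
  simp [pcMetToAffine, pcLieToAffine, pcMetLieGen, pcLieGen]

lemma lin_pcMetToAffine_of_mem {y : pcMetabelianLieAlgebra R Γ}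
    (hy : y ∈ pcMetDerivedIdeal R Γ) : (pcMetToAffine R hw y).lin = 0 :=
  AffineLieAlgebra.lin_eq_zero_of_mem_derivedSeries_one
    (LieIdeal.derivedSeries_map_le (f := pcMetToAffine R hw) 1 (LieIdeal.mem_map hy))

lemma trans_pcMetToAffine_pcAdEnd (a : A) (y : pcMetDerivedIdeal R Γ) :
    (pcMetToAffine R hw (pcAdEnd R Γ (pcMetLieGen R Γ a) y : pcMetabelianLieAlgebra R Γ)).trans =
      ξ a * (pcMetToAffine R hw y).trans := by
  change (pcMetToAffine R hw ⁅pcMetLieGen R Γ a, (y : pcMetabelianLieAlgebra R Γ)⁆).trans = _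
  simp [lin_pcMetToAffine_of_mem R hw y.2, affineGen]

variable (φ : MvPolynomial A R →ₐ[R] Module.End R (pcMetDerivedIdeal R Γ))
  (hφ : ∀ a, φ (X a) = pcAdEnd R Γ (pcMetLieGen R Γ a))
include hφ

lemma trans_pcMetToAffine_apply (p : MvPolynomial A R) (y : pcMetDerivedIdeal R Γ) :
    (pcMetToAffine R hw (φ p y : pcMetabelianLieAlgebra R Γ)).trans =
      aeval ξ p * (pcMetToAffine R hw y).trans := by
  induction p using MvPolynomial.induction_on generalizing y with
  | C r =>
    rw [← algebraMap_eq, φ.commutes, Module.algebraMap_end_apply, (aeval ξ).commutes,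
      ← Algebra.smul_def]
    simp
  | add p q hp hq => simp [hp, hq, add_mul]
  | mul_X p a hp =>
    rw [map_mul, Module.End.mul_apply, hp, hφ, trans_pcMetToAffine_pcAdEnd, map_mul, aeval_X]
    ring

lemma aeval_mul_eq_zero_of_apply_pcBracketGen_eq_zero {p : MvPolynomial A R} {ai aj : A}
    (hp : φ p (pcBracketGen R Γ ai aj) = 0) :
    aeval ξ p * (ξ ai * ξ aj * (w aj - w ai)) = 0 := by
  have h := trans_pcMetToAffine_apply R hw φ hφ p (pcBracketGen R Γ ai aj)
  rw [hp] at h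
  simpa [pcBracketGen, lie_affineGen] using h.symm

end AffineRepresentation

section PathsAnnihilate

variable {R : Type} [CommRing R] {A : Type} {Γ : SimpleGraph A}

lemma pcMetLieGen_lie_eq_zero_of_adj {a b : A} (hab : Γ.Adj a b) :
    ⁅pcMetLieGen R Γ a, pcMetLieGen R Γ b⁆ = 0 := by
  have : ⁅pcLieGen R Γ a, pcLieGen R Γ b⁆ = 0 :=
    (LieSubmodule.Quotient.mk_eq_zero' (N := pcLieRels R Γ)).2
      (LieSubmodule.subset_lieSpan ⟨a, b, hab, rfl⟩)
  rw [pcMetLieGen, pcMetLieGen, ← LieSubmodule.Quotient.mk_bracket, this]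
  rfl

lemma pcBracketGen_self (a : A) : pcBracketGen R Γ a a = 0 :=
  Subtype.ext (lie_self _)

lemma pcBracketGen_eq_zero_of_adj {a b : A} (hab : Γ.Adj a b) : pcBracketGen R Γ a b = 0 :=
  Subtype.ext (pcMetLieGen_lie_eq_zero_of_adj hab)

lemma pcAdEnd_pcBracketGen_of_adj {x u : A} (hxu : Γ.Adj x u) (y : A) :
    pcAdEnd R Γ (pcMetLieGen R Γ u) (pcBracketGen R Γ x y) =
      pcAdEnd R Γ (pcMetLieGen R Γ x) (pcBracketGen R Γ u y) := by
  apply Subtype.ext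
  change ⁅pcMetLieGen R Γ u, ⁅pcMetLieGen R Γ x, pcMetLieGen R Γ y⁆⁆ =
    ⁅pcMetLieGen R Γ x, ⁅pcMetLieGen R Γ u, pcMetLieGen R Γ y⁆⁆
  rw [leibniz_lie, pcMetLieGen_lie_eq_zero_of_adj hxu.symm, zero_lie, zero_add]

variable (φ : MvPolynomial A R →ₐ[R] Module.End R (pcMetDerivedIdeal R Γ))
  (hφ : ∀ a, φ (X a) = pcAdEnd R Γ (pcMetLieGen R Γ a))
include hφ

lemma apply_prod_support_dropLast_pcBracketGen_eq_zero {x u y : A} (hxu : Γ.Adj x u)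
    (q : Γ.Walk u y) :
    φ (q.support.dropLast.map X).prod (pcBracketGen R Γ x y) = 0 := by
  induction q generalizing x with
  | nil => simpa using pcBracketGen_eq_zero_of_adj hxu
  | @cons u v y huv q ih =>
    have hcomm : φ (q.support.dropLast.map X).prod ∘ₗ φ (X x) =
        φ (X x) ∘ₗ φ (q.support.dropLast.map X).prod := by
      rw [← Module.End.mul_eq_comp, ← Module.End.mul_eq_comp, ← map_mul, ← map_mul, mul_comm]
    rw [SimpleGraph.Walk.support_cons, List.dropLast_cons_of_ne_nil q.support_ne_nil,
      List.map_cons, List.prod_cons, mul_comm, map_mul, Module.End.mul_apply, hφ,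
      pcAdEnd_pcBracketGen_of_adj hxu, ← hφ, ← LinearMap.comp_apply, hcomm,
      LinearMap.comp_apply, ih huv, map_zero]

lemma apply_prod_support_tail_dropLast_pcBracketGen_eq_zero {x y : A} (q : Γ.Walk x y) :
    φ (q.support.tail.dropLast.map X).prod (pcBracketGen R Γ x y) = 0 := by
  cases q with
  | nil => simp [pcBracketGen_self]
  | cons hxu q => exact apply_prod_support_dropLast_pcBracketGen_eq_zero φ hφ hxu q

lemma apply_pcBracketGen_eq_zero_of_mem_pcPathIdeal {ai aj : A} {p : MvPolynomial A R}
    (hp : p ∈ pcPathIdeal R Γ ai aj) : φ p (pcBracketGen R Γ ai aj) = 0 := by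
  induction hp using Submodule.span_induction with
  | mem p hp =>
    obtain ⟨q, -, rfl⟩ := hp
    exact apply_prod_support_tail_dropLast_pcBracketGen_eq_zero φ hφ q
  | zero => simp
  | add p p' _ _ hp hp' => simp [hp, hp']
  | smul c p _ hp => rw [smul_eq_mul, map_mul, Module.End.mul_apply, hp, map_zero]

end PathsAnnihilate

lemma MvPolynomial.list_prod_X_dvd_monomial {σ R : Type*} [CommSemiring R] {l : List σ}
    (hl : l.Nodup) {α : σ →₀ ℕ} (hα : ∀ a ∈ l, a ∈ α.support) (c : R) :
    (l.map X).prod ∣ monomial α c := by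
  classical
  rw [← List.prod_toFinset _ hl, monomial_eq, Finsupp.prod]
  refine Dvd.dvd.mul_left ?_ _
  calc ∏ a ∈ l.toFinset, (X a : MvPolynomial σ R)
      ∣ ∏ a ∈ l.toFinset, X a ^ α a :=
        Finset.prod_dvd_prod_of_dvd _ _ fun a ha =>
          dvd_pow_self _ (Finsupp.mem_support_iff.1 (hα a (List.mem_toFinset.1 ha)))
    _ ∣ ∏ a ∈ α.support, X a ^ α a :=
        Finset.prod_dvd_prod_of_subset _ _ _ fun a ha => hα a (List.mem_toFinset.1 ha)

lemma MvPolynomial.killCompl_X_eq_zero {σ τ R : Type*} [CommSemiring R] {f : σ → τ}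
    (hf : Function.Injective f) {i : τ} (hi : i ∉ Set.range f) :
    killCompl (R := R) hf (X i) = 0 :=
  killCompl_monomial_eq_zero_of_notMem_range hf 1 (by simp) hi

lemma MvPolynomial.killCompl_X_apply {σ τ R : Type*} [CommSemiring R] {f : σ → τ}
    (hf : Function.Injective f) (i : σ) : killCompl (R := R) hf (X (f i)) = X i := by
  simpa using killCompl_rename_app (R := R) hf (X i)

namespace SimpleGraph

variable {V : Type*} {G : SimpleGraph V} {u v x : V}

lemma spanningCoe_induce_adj {s : Set V} :
    (G.induce s).spanningCoe.Adj u v ↔ G.Adj u v ∧ u ∈ s ∧ v ∈ s := by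
  simp

lemma Walk.IsPath.ne_of_mem_support_tail_dropLast {p : G.Walk u v} (hp : p.IsPath)
    (hx : x ∈ p.support.tail.dropLast) : x ≠ u ∧ x ≠ v := by
  have hnodup := hp.support_nodup
  constructor
  · rintro rfl
    rw [← p.cons_tail_support] at hnodup
    exact (List.nodup_cons.1 hnodup).1 (List.mem_of_mem_dropLast hx)
  · rintro rfl
    rw [← p.dropLast_support_concat, List.nodup_append] at hnodup
    rw [← List.tail_dropLast] at hx
    exact hnodup.2.2 _ (List.mem_of_mem_tail hx) _ (List.mem_singleton_self _) rfl

lemma Walk.mem_of_mem_support_spanningCoe_induce {s : Set V}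
    (p : (G.induce s).spanningCoe.Walk u v) (hu : u ∈ s) (hx : x ∈ p.support) : x ∈ s := by
  induction p with
  | nil =>
    rw [Walk.support_nil, List.mem_singleton] at hx
    rwa [hx]
  | cons h p ih =>
    rcases List.mem_cons.1 hx with rfl | hx
    · exact hu
    · exact ih (spanningCoe_induce_adj.1 h).2.2 hx

end SimpleGraph

section PathIdealContainsAnnihilator

variable {R : Type} [CommRing R] {A : Type} {Γ : SimpleGraph A}

lemma monomial_mem_pcPathIdeal {ai aj : A} {q : Γ.Walk ai aj} (hq : q.IsPath) {α : A →₀ ℕ}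
    (hα : ∀ a ∈ q.support, a = ai ∨ a = aj ∨ a ∈ α.support) (c : R) :
    monomial α c ∈ pcPathIdeal R Γ ai aj := by
  refine Ideal.mem_of_dvd _ (list_prod_X_dvd_monomial ?_ (fun a ha => ?_) c)
    (Ideal.subset_span ⟨q, hq, rfl⟩)
  · exact ((List.dropLast_sublist _).trans (List.tail_sublist _)).nodup hq.support_nodup
  · obtain ⟨hai, haj⟩ := hq.ne_of_mem_support_tail_dropLast ha
    have := hα a (List.mem_of_mem_tail (List.mem_of_mem_dropLast ha))
    tauto

variable (φ : MvPolynomial A R →ₐ[R] Module.End R (pcMetDerivedIdeal R Γ))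
  (hφ : ∀ a, φ (X a) = pcAdEnd R Γ (pcMetLieGen R Γ a))
include hφ

lemma coeff_eq_zero_of_not_reachable {ai aj : A} {V : Set A} (hai : ai ∈ V) (haj : aj ∈ V)
    (hr : ¬ (Γ.induce V).spanningCoe.Reachable ai aj) {p : MvPolynomial A R}
    (hp : φ p (pcBracketGen R Γ ai aj) = 0) {α : A →₀ ℕ} (hα : ↑α.support ⊆ V) :
    coeff α p = 0 := by
  classical
  set Γ' := (Γ.induce V).spanningCoe
  set κ : MvPolynomial A R →ₐ[R] MvPolynomial V R := killCompl Subtype.val_injective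
  set w : A → MvPolynomial V R := fun a => if Γ'.Reachable ai a then 0 else 1
  -- `κ` kills the edges leaving `V`, and `w` is constant along the edges inside `V`.
  have hw : ∀ a b, Γ.Adj a b → (κ ∘ X) a * (κ ∘ X) b * (w b - w a) = 0 := by
    intro a b hab
    by_cases ha : a ∈ V
    · by_cases hb : b ∈ V
      · have hadj : Γ'.Adj a b := SimpleGraph.spanningCoe_induce_adj.2 ⟨hab, ha, hb⟩
        have : Γ'.Reachable ai a ↔ Γ'.Reachable ai b :=
          ⟨fun h => h.trans hadj.reachable, fun h => h.trans hadj.symm.reachable⟩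
        simp only [w, this, sub_self, mul_zero]
      · simp [κ, killCompl_X_eq_zero _ (show b ∉ Set.range Subtype.val by simpa using hb)]
    · simp [κ, killCompl_X_eq_zero _ (show a ∉ Set.range Subtype.val by simpa using ha)]
  have h := aeval_mul_eq_zero_of_apply_pcBracketGen_eq_zero R hw φ hφ hp
  rw [← aeval_unique] at h
  have hκp : κ p = 0 := by
    simp only [w, hr, κ, Function.comp_apply, killCompl_X_apply Subtype.val_injective ⟨ai, hai⟩,
      killCompl_X_apply Subtype.val_injective ⟨aj, haj⟩, SimpleGraph.Reachable.refl,
      ↓reduceIte, sub_zero, mul_one] at h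
    exact (isRegular_X.mul isRegular_X).right.mul_right_eq_zero_iff.1 h
  rw [← Finsupp.mapDomain_comapDomain (Subtype.val : V → A) Subtype.val_injective α
    (by rwa [Subtype.range_coe]), ← coeff_killCompl Subtype.val_injective, hκp, coeff_zero]

lemma mem_pcPathIdeal_of_apply_pcBracketGen_eq_zero {ai aj : A} {p : MvPolynomial A R}
    (hp : φ p (pcBracketGen R Γ ai aj) = 0) : p ∈ pcPathIdeal R Γ ai aj := by
  classical
  rw [p.as_sum]
  refine Ideal.sum_mem _ fun α hα => ?_
  set V : Set A := insert ai (insert aj α.support)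
  by_cases hr : (Γ.induce V).spanningCoe.Reachable ai aj
  · obtain ⟨q, hq⟩ := hr.some.toPath
    refine monomial_mem_pcPathIdeal (hq.mapLe (Γ.spanningCoe_induce_le V)) (fun a ha => ?_) _
    rw [SimpleGraph.Walk.support_mapLe_eq_support] at ha
    simpa [V] using q.mem_of_mem_support_spanningCoe_induce (Set.mem_insert ai _) ha
  · refine absurd (coeff_eq_zero_of_not_reachable φ hφ (Set.mem_insert ai _) ?_ hr hp ?_)
      (mem_support_iff.1 hα)
    · exact Set.mem_insert_of_mem _ (Set.mem_insert aj _)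
    · exact fun a ha => Set.mem_insert_of_mem _ (Set.mem_insert_of_mem _ ha)

end PathIdealContainsAnnihilator

theorem stmt18_general (R : Type) [CommRing R]
    {A : Type} (Γ : SimpleGraph A) (ai aj : A)
    (φ : MvPolynomial A R →ₐ[R] Module.End R (pcMetDerivedIdeal R Γ))
    (hφ : ∀ a : A, φ (MvPolynomial.X a) = pcAdEnd R Γ (pcMetLieGen R Γ a)) :
    {p : MvPolynomial A R | φ p (pcBracketGen R Γ ai aj) = 0} =
      (pcPathIdeal R Γ ai aj : Set (MvPolynomial A R)) :=
  Set.ext fun _ => ⟨mem_pcPathIdeal_of_apply_pcBracketGen_eq_zero φ hφ,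
    apply_pcBracketGen_eq_zero_of_mem_pcPathIdeal φ hφ⟩

theorem stmt18 (R : Type) [CommRing R] [IsDomain R] [Infinite R] (hchar : ringChar R ≠ 2)
    {A : Type} [Fintype A] (Γ : SimpleGraph A) (ai aj : A) (hne : ai ≠ aj)
    (hadj : ¬ Γ.Adj ai aj)
    (φ : MvPolynomial A R →ₐ[R] Module.End R (pcMetDerivedIdeal R Γ))
    (hφ : ∀ a : A, φ (MvPolynomial.X a) = pcAdEnd R Γ (pcMetLieGen R Γ a)) :
    {p : MvPolynomial A R | φ p (pcBracketGen R Γ ai aj) = 0} =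
      (pcPathIdeal R Γ ai aj : Set (MvPolynomial A R)) :=
  stmt18_general R Γ ai aj φ hφ
end
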